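/- For every natural number n, the term add^x_n β-reduces in exactly n steps to x_[n]; more generally, for every term M of Λ_{π,⟨⟩}, add^x_n[M/x] →ⁿ_β M_[n]. -/

import Mathlib

set_option autoImplicit false

/-! ## Types of (second-order) multiplicative additive linear logic -/

inductive Ty : Type
  | var : ℕ → Ty
  | arrow : Ty → Ty → Ty
  | wth : Ty → Ty → Ty
  | all : ℕ → Ty → Ty
deriving DecidableEq

namespace Ty

/-- Free type variables. -/
def fv : Ty → Finset ℕ
  | var a => {a}
  | arrow A B => A.fv ∪ B.fv
  | wth A B => A.fv ∪ B.fv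
  | all a A => A.fv.erase a

/-- Substitution `A.tsubst a B = A⟨B/a⟩` of the type `B` for the type variable `a`. -/
def tsubst : Ty → ℕ → Ty → Ty
  | var b, a, B => if b = a then B else var b
  | arrow C D, a, B => arrow (C.tsubst a B) (D.tsubst a B)
  | wth C D, a, B => wth (C.tsubst a B) (D.tsubst a B)
  | all b C, a, B => if b = a then all b C else all b (C.tsubst a B)

/-- Size of a type. -/
def size : Ty → ℕ
  | var _ => 1
  | arrow A B => A.size + B.size + 1
  | wth A B => A.size + B.size + 1
  | all _ A => A.size + 1

/-- `noForallAt true A` says that no negative subtype of `A` is a `∀`-type;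
`noForallAt false A` says that no positive subtype of `A` is a `∀`-type. -/
def noForallAt : Bool → Ty → Prop
  | _, var _ => True
  | b, arrow A B => noForallAt (!b) A ∧ noForallAt b B
  | b, wth A B => noForallAt b A ∧ noForallAt b B
  | true, all _ A => noForallAt true A
  | false, all _ _ => False

/-- `A` has no negative occurrence of `∀`, i.e. `A` is a ∀-lazy type. -/
def noNegForall (A : Ty) : Prop := noForallAt true A

/-- `A` has no positive occurrence of `∀`. -/
def noPosForall (A : Ty) : Prop := noForallAt false A

/-- Nesting: `A.nest 0 = A`, `A.nest (n+1) = (A.nest n) & (A.nest n)`. -/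
def nest (A : Ty) : ℕ → Ty
  | 0 => A
  | n + 1 => wth (A.nest n) (A.nest n)

end Ty

/-! ## Raw terms of `Λ_copy` (which contain the terms of `Λ_{π,⟨⟩}`) -/

inductive Tm : Type
  | var : ℕ → Tm
  | lam : ℕ → Tm → Tm
  | app : Tm → Tm → Tm
  | pair : Tm → Tm → Tm
  | proj : Fin 2 → Tm → Tm
  /-- `copy U M x y P Q` is `copy^U M as x,y in ⟨P,Q⟩`, binding `x` in `P` and `y` in `Q`. -/
  | copy : Tm → Tm → ℕ → ℕ → Tm → Tm → Tm
deriving DecidableEq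

namespace Tm

/-- Free (term) variables. -/
def fv : Tm → Finset ℕ
  | var x => {x}
  | lam x M => M.fv.erase x
  | app M N => M.fv ∪ N.fv
  | pair M N => M.fv ∪ N.fv
  | proj _ M => M.fv
  | copy U M x y P Q => ((U.fv ∪ M.fv) ∪ P.fv.erase x) ∪ Q.fv.erase y

/-- Substitution `M.subst N z = M[N/z]`. -/
def subst : Tm → Tm → ℕ → Tm
  | var x, N, z => if x = z then N else var x
  | lam x M, N, z => if x = z then lam x M else lam x (M.subst N z)
  | app M P, N, z => app (M.subst N z) (P.subst N z)
  | pair M P, N, z => pair (M.subst N z) (P.subst N z)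
  | proj i M, N, z => proj i (M.subst N z)
  | copy U M x y P Q, N, z =>
      copy (U.subst N z) (M.subst N z) x y
        (if x = z then P else P.subst N z)
        (if y = z then Q else Q.subst N z)

/-- Size of a term. -/
def size : Tm → ℕ
  | var _ => 1
  | lam _ M => M.size + 1
  | app M N => M.size + N.size + 1
  | pair M N => M.size + N.size + 1
  | proj _ M => M.size + 1
  | copy U M _ _ P Q => U.size + M.size + (P.size + Q.size + 1) + 1

/-- Number of free occurrences of the variable `z` in a term. -/
def count (z : ℕ) : Tm → ℕ
  | var x => if x = z then 1 else 0
  | lam x M => if x = z then 0 else M.count z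
  | app M N => M.count z + N.count z
  | pair M N => M.count z + N.count z
  | proj _ M => M.count z
  | copy U M x y P Q =>
      U.count z + M.count z + (if x = z then 0 else P.count z) +
        (if y = z then 0 else Q.count z)

/-- The term contains no occurrence of `proj` and no occurrence of `copy`
(equivalently, it is generated by the grammar `U ::= x | λx.U | U U | ⟨U,U⟩`). -/
def noProjCopy : Tm → Prop
  | var _ => True
  | lam _ M => M.noProjCopy
  | app M N => M.noProjCopy ∧ N.noProjCopy
  | pair M N => M.noProjCopy ∧ N.noProjCopy
  | proj _ _ => False
  | copy _ _ _ _ _ _ => False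

/-- Nesting: `M.nest 0 = M`, `M.nest (n+1) = ⟨M.nest n, M.nest n⟩`. -/
def nest (M : Tm) : ℕ → Tm
  | 0 => M
  | n + 1 => pair (M.nest n) (M.nest n)

end Tm

/-- The β-step `(λx.U)V → U[V/x]`, closed under any context (used to define values). -/
inductive BStep : Tm → Tm → Prop
  | beta (x : ℕ) (M N : Tm) : BStep (.app (.lam x M) N) (M.subst N x)
  | lam (x : ℕ) {M M' : Tm} : BStep M M' → BStep (.lam x M) (.lam x M')
  | appL {M M' N : Tm} : BStep M M' → BStep (.app M N) (.app M' N)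
  | appR {M N N' : Tm} : BStep N N' → BStep (.app M N) (.app M N')
  | pairL {M M' N : Tm} : BStep M M' → BStep (.pair M N) (.pair M' N)
  | pairR {M N N' : Tm} : BStep N N' → BStep (.pair M N) (.pair M N')
  | proj (i : Fin 2) {M M' : Tm} : BStep M M' → BStep (.proj i M) (.proj i M')
  | copyU {U U' M P Q : Tm} (x y : ℕ) : BStep U U' →
      BStep (.copy U M x y P Q) (.copy U' M x y P Q)
  | copyM {U M M' P Q : Tm} (x y : ℕ) : BStep M M' →
      BStep (.copy U M x y P Q) (.copy U M' x y P Q)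
  | copyP {U M P P' Q : Tm} (x y : ℕ) : BStep P P' →
      BStep (.copy U M x y P Q) (.copy U M x y P' Q)
  | copyQ {U M P Q Q' : Tm} (x y : ℕ) : BStep Q Q' →
      BStep (.copy U M x y P Q) (.copy U M x y P Q')

/-- `V ∈ 𝒱`: a value is a closed raw term generated by the grammar
`U ::= x | λx.U | U U | ⟨U,U⟩` which is normal for the rule `(λx.U)V → U[V/x]`. -/
def IsValue (V : Tm) : Prop :=
  V.noProjCopy ∧ V.fv = ∅ ∧ ∀ N, ¬ BStep V N

/-- One-step reduction on `Λ_copy`, closed under any context. -/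
inductive Step : Tm → Tm → Prop
  | beta (x : ℕ) (M N : Tm) : Step (.app (.lam x M) N) (M.subst N x)
  | projFst (M N : Tm) : Step (.proj 0 (.pair M N)) M
  | projSnd (M N : Tm) : Step (.proj 1 (.pair M N)) N
  | copy {U V : Tm} (x y : ℕ) (P Q : Tm) : IsValue U → IsValue V →
      Step (.copy V U x y P Q) (.pair (P.subst U x) (Q.subst U y))
  | lam (x : ℕ) {M M' : Tm} : Step M M' → Step (.lam x M) (.lam x M')
  | appL {M M' N : Tm} : Step M M' → Step (.app M N) (.app M' N)
  | appR {M N N' : Tm} : Step N N' → Step (.app M N) (.app M N')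
  | pairL {M M' N : Tm} : Step M M' → Step (.pair M N) (.pair M' N)
  | pairR {M N N' : Tm} : Step N N' → Step (.pair M N) (.pair M N')
  | proj (i : Fin 2) {M M' : Tm} : Step M M' → Step (.proj i M) (.proj i M')
  | copyU {U U' M P Q : Tm} (x y : ℕ) : Step U U' →
      Step (.copy U M x y P Q) (.copy U' M x y P Q)
  | copyM {U M M' P Q : Tm} (x y : ℕ) : Step M M' →
      Step (.copy U M x y P Q) (.copy U M' x y P Q)
  | copyP {U M P P' Q : Tm} (x y : ℕ) : Step P P' →
      Step (.copy U M x y P Q) (.copy U M x y P' Q)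
  | copyQ {U M P Q Q' : Tm} (x y : ℕ) : Step Q Q' →
      Step (.copy U M x y P Q) (.copy U M x y P Q')

/-- Exactly-`n`-fold composition of a relation. -/
inductive RelN {α : Type*} (R : α → α → Prop) : ℕ → α → α → Prop
  | refl (a : α) : RelN R 0 a a
  | head {a b c : α} {n : ℕ} : R a b → RelN R n b c → RelN R (n + 1) a c

/-- `M` reduces to `N` in exactly `n` steps. -/
abbrev StepN (n : ℕ) (M N : Tm) : Prop := RelN Step n M N

/-- Reflexive-transitive closure of one-step reduction. -/
abbrev Steps (M N : Tm) : Prop := Relation.ReflTransGen Step M N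

/-- `M` is a normal form. -/
def NormalForm (M : Tm) : Prop := ∀ N, ¬ Step M N

/-- α-equivalence of raw terms. -/
inductive Aeq : Tm → Tm → Prop
  | var (x : ℕ) : Aeq (.var x) (.var x)
  | lam {x y : ℕ} {M N : Tm} (z : ℕ) :
      z ∉ (Tm.lam x M).fv → z ∉ (Tm.lam y N).fv →
      Aeq (M.subst (.var z) x) (N.subst (.var z) y) → Aeq (.lam x M) (.lam y N)
  | app {M M' N N' : Tm} : Aeq M M' → Aeq N N' → Aeq (.app M N) (.app M' N')
  | pair {M M' N N' : Tm} : Aeq M M' → Aeq N N' → Aeq (.pair M N) (.pair M' N')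
  | proj (i : Fin 2) {M M' : Tm} : Aeq M M' → Aeq (.proj i M) (.proj i M')
  | copy {U U' M M' P P' Q Q' : Tm} {x₁ y₁ x₂ y₂ : ℕ} (z w : ℕ) :
      z ∉ P.fv.erase x₁ → z ∉ P'.fv.erase x₂ → w ∉ Q.fv.erase y₁ → w ∉ Q'.fv.erase y₂ →
      Aeq U U' → Aeq M M' →
      Aeq (P.subst (.var z) x₁) (P'.subst (.var z) x₂) →
      Aeq (Q.subst (.var w) y₁) (Q'.subst (.var w) y₂) →
      Aeq (.copy U M x₁ y₁ P Q) (.copy U' M' x₂ y₂ P' Q')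

/-! ## Contexts -/

/-- A context is a finite multiset of assumptions `x : A`. -/
abbrev Ctx := Multiset (ℕ × Ty)

/-- Free type variables of a context. -/
def ctxFv (Γ : Ctx) : Finset ℕ := (Γ.map fun p => p.2.fv).sup

/-- Size of a context. -/
def ctxSize (Γ : Ctx) : ℕ := (Γ.map fun p => p.2.size).sum

/-- The judgement `x₁:A₁, …, xₙ:Aₙ ⊢ B` is ∀-lazy, i.e. `A₁ ⊸ … ⊸ Aₙ ⊸ B` is a ∀-lazy type. -/
def LazyJudg (Γ : Ctx) (B : Ty) : Prop :=
  (∀ p ∈ Γ, Ty.noPosForall p.2) ∧ B.noNegForall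

/-! ## The terms `add` and `ladd` -/

/-- `addTm x n = add^x_n`:  `add^x_0 = x`, `add^x_{n+1} = (λy.add^y_n)⟨x,x⟩`. -/
def addTm : ℕ → ℕ → Tm
  | x, 0 => .var x
  | x, n + 1 => .app (.lam (x + 1) (addTm (x + 1) n)) (.pair (.var x) (.var x))

/-- `laddTm V x k n = ladd^{x,V_[k]}_n`:  `ladd^{x,V_[k]}_0 = x` and
`ladd^{x,V_[k]}_{n+1} = (λy.ladd^{y,V_[k+1]}_n)(copy^{V_[k]} x as x₁,x₂ in ⟨x₁,x₂⟩)`. -/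
def laddTm (V : Tm) : ℕ → ℕ → ℕ → Tm
  | x, k, 0 => .var x
  | x, k, n + 1 =>
      .app (.lam (x + 1) (laddTm V (x + 1) (k + 1) n))
        (.copy (V.nest k) (.var x) (x + 1) (x + 2) (.var (x + 1)) (.var (x + 2)))

/-! ## The type assignment system `IMALL₂` -/

/-- The type assignment system `IMALL₂` for `Λ_{π,⟨⟩}`. -/
inductive IMALL : Ctx → Tm → Ty → Prop
  | ax (x : ℕ) (A : Ty) : IMALL ((x, A) ::ₘ 0) (.var x) A
  | cut {Γ Δ : Ctx} {N M : Tm} {A C : Ty} (x : ℕ) :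
      IMALL Γ N A → IMALL ((x, A) ::ₘ Δ) M C → Disjoint (ctxFv Γ) (ctxFv Δ) →
      IMALL (Γ + Δ) (M.subst N x) C
  | arrR {Γ : Ctx} {M : Tm} {A B : Ty} (x : ℕ) :
      IMALL ((x, A) ::ₘ Γ) M B → IMALL Γ (.lam x M) (.arrow A B)
  | arrL {Γ Δ : Ctx} {N M : Tm} {A B C : Ty} (x y : ℕ) :
      IMALL Γ N A → IMALL ((x, B) ::ₘ Δ) M C → Disjoint (ctxFv Γ) (ctxFv Δ) →
      IMALL ((y, .arrow A B) ::ₘ (Γ + Δ)) (M.subst (.app (.var y) N) x) C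
  | withR {Γ : Ctx} {M₁ M₂ : Tm} {A₁ A₂ : Ty} :
      IMALL Γ M₁ A₁ → IMALL Γ M₂ A₂ → IMALL Γ (.pair M₁ M₂) (.wth A₁ A₂)
  | withL₁ {Γ : Ctx} {M : Tm} {A₁ A₂ C : Ty} (x y : ℕ) :
      IMALL ((x, A₁) ::ₘ Γ) M C →
      IMALL ((y, .wth A₁ A₂) ::ₘ Γ) (M.subst (.proj 0 (.var y)) x) C
  | withL₂ {Γ : Ctx} {M : Tm} {A₁ A₂ C : Ty} (x y : ℕ) :
      IMALL ((x, A₂) ::ₘ Γ) M C →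
      IMALL ((y, .wth A₁ A₂) ::ₘ Γ) (M.subst (.proj 1 (.var y)) x) C
  | allR {Γ : Ctx} {M : Tm} {A : Ty} (a g : ℕ) :
      IMALL Γ M (A.tsubst a (.var g)) → g ∉ ctxFv Γ → IMALL Γ M (.all a A)
  | allL {Γ : Ctx} {M : Tm} {A B C : Ty} (x a : ℕ) :
      IMALL ((x, A.tsubst a B) ::ₘ Γ) M C → IMALL ((x, .all a A) ::ₘ Γ) M C

/-! ## Derivations of the type assignment system `LAM` -/

/-- Derivations of the type assignment system `LAM`
(Linearly Additive Multiplicative Type Assignment). -/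
inductive Deriv : Ctx → Tm → Ty → Type
  | ax (x : ℕ) (A : Ty) : Deriv ((x, A) ::ₘ 0) (.var x) A
  | cut {Γ Δ : Ctx} {N M : Tm} {A C : Ty} (x : ℕ) :
      Deriv Γ N A → Deriv ((x, A) ::ₘ Δ) M C → Disjoint (ctxFv Γ) (ctxFv Δ) →
      Deriv (Γ + Δ) (M.subst N x) C
  | arrR {Γ : Ctx} {M : Tm} {A B : Ty} (x : ℕ) :
      Deriv ((x, A) ::ₘ Γ) M B → Deriv Γ (.lam x M) (.arrow A B)
  | arrL {Γ Δ : Ctx} {N M : Tm} {A B C : Ty} (x y : ℕ) :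
      Deriv Γ N A → Deriv ((x, B) ::ₘ Δ) M C → Disjoint (ctxFv Γ) (ctxFv Δ) →
      (B.fv = ∅ → A.fv = ∅) →
      Deriv ((y, .arrow A B) ::ₘ (Γ + Δ)) (M.subst (.app (.var y) N) x) C
  | allR {Γ : Ctx} {M : Tm} {A : Ty} (a g : ℕ) :
      Deriv Γ M (A.tsubst a (.var g)) → g ∉ ctxFv Γ →
      ((Ty.all a A).fv = ∅ → ctxFv Γ = ∅) →
      Deriv Γ M (.all a A)
  | allL {Γ : Ctx} {M : Tm} {A B C : Ty} (x a : ℕ) :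
      Deriv ((x, A.tsubst a B) ::ₘ Γ) M C → Deriv ((x, .all a A) ::ₘ Γ) M C
  | andR0 {M₁ M₂ : Tm} {A₁ A₂ : Ty} :
      Deriv 0 M₁ A₁ → Deriv 0 M₂ A₂ →
      A₁.fv = ∅ → A₂.fv = ∅ → A₁.noNegForall → A₂.noNegForall →
      Deriv 0 (.pair M₁ M₂) (.wth A₁ A₂)
  | andL₁ {Γ : Ctx} {M : Tm} {A₁ A₂ C : Ty} (x y : ℕ) :
      Deriv ((x, A₁) ::ₘ Γ) M C →
      A₁.fv = ∅ → A₂.fv = ∅ → A₁.noNegForall → A₂.noNegForall →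
      Deriv ((y, .wth A₁ A₂) ::ₘ Γ) (M.subst (.proj 0 (.var y)) x) C
  | andL₂ {Γ : Ctx} {M : Tm} {A₁ A₂ C : Ty} (x y : ℕ) :
      Deriv ((x, A₂) ::ₘ Γ) M C →
      A₁.fv = ∅ → A₂.fv = ∅ → A₁.noNegForall → A₂.noNegForall →
      Deriv ((y, .wth A₁ A₂) ::ₘ Γ) (M.subst (.proj 1 (.var y)) x) C
  | andR1 {M₁ M₂ V : Tm} {A A₁ A₂ : Ty} (x x₁ x₂ : ℕ) :
      Deriv ((x₁, A) ::ₘ 0) M₁ A₁ → Deriv ((x₂, A) ::ₘ 0) M₂ A₂ → Deriv 0 V A →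
      IsValue V →
      A.fv = ∅ → A₁.fv = ∅ → A₂.fv = ∅ →
      A.noNegForall → A₁.noNegForall → A₂.noNegForall →
      Deriv ((x, A) ::ₘ 0) (.copy V (.var x) x₁ x₂ M₁ M₂) (.wth A₁ A₂)

namespace Deriv

/-- Size of a derivation: the number of its rule instances. -/
def size : {Γ : Ctx} → {M : Tm} → {A : Ty} → Deriv Γ M A → ℕ
  | _, _, _, .ax _ _ => 1
  | _, _, _, .cut _ D₁ D₂ _ => D₁.size + D₂.size + 1
  | _, _, _, .arrR _ D => D.size + 1
  | _, _, _, .arrL _ _ D₁ D₂ _ _ => D₁.size + D₂.size + 1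
  | _, _, _, .allR _ _ D _ _ => D.size + 1
  | _, _, _, .allL _ _ D => D.size + 1
  | _, _, _, .andR0 D₁ D₂ _ _ _ _ => D₁.size + D₂.size + 1
  | _, _, _, .andL₁ _ _ D _ _ _ _ => D.size + 1
  | _, _, _, .andL₂ _ _ D _ _ _ _ => D.size + 1
  | _, _, _, .andR1 _ _ _ D₁ D₂ D₃ _ _ _ _ _ _ _ => D₁.size + D₂.size + D₃.size + 1

/-- Weight of a derivation: the number of instances of the rule `&R1`. -/
def weight : {Γ : Ctx} → {M : Tm} → {A : Ty} → Deriv Γ M A → ℕ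
  | _, _, _, .ax _ _ => 0
  | _, _, _, .cut _ D₁ D₂ _ => D₁.weight + D₂.weight
  | _, _, _, .arrR _ D => D.weight
  | _, _, _, .arrL _ _ D₁ D₂ _ _ => D₁.weight + D₂.weight
  | _, _, _, .allR _ _ D _ _ => D.weight
  | _, _, _, .allL _ _ D => D.weight
  | _, _, _, .andR0 D₁ D₂ _ _ _ _ => D₁.weight + D₂.weight
  | _, _, _, .andL₁ _ _ D _ _ _ _ => D.weight
  | _, _, _, .andL₂ _ _ D _ _ _ _ => D.weight
  | _, _, _, .andR1 _ _ _ D₁ D₂ D₃ _ _ _ _ _ _ _ =>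
      D₁.weight + D₂.weight + D₃.weight + 1

/-- The derivation contains no instance of the `cut` rule. -/
def cutFree : {Γ : Ctx} → {M : Tm} → {A : Ty} → Deriv Γ M A → Prop
  | _, _, _, .ax _ _ => True
  | _, _, _, .cut _ _ _ _ => False
  | _, _, _, .arrR _ D => D.cutFree
  | _, _, _, .arrL _ _ D₁ D₂ _ _ => D₁.cutFree ∧ D₂.cutFree
  | _, _, _, .allR _ _ D _ _ => D.cutFree
  | _, _, _, .allL _ _ D => D.cutFree
  | _, _, _, .andR0 D₁ D₂ _ _ _ _ => D₁.cutFree ∧ D₂.cutFree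
  | _, _, _, .andL₁ _ _ D _ _ _ _ => D.cutFree
  | _, _, _, .andL₂ _ _ D _ _ _ _ => D.cutFree
  | _, _, _, .andR1 _ _ _ D₁ D₂ D₃ _ _ _ _ _ _ _ =>
      D₁.cutFree ∧ D₂.cutFree ∧ D₃.cutFree

/-- All the axioms of the derivation are atomic, i.e. of the form `x : α ⊢ x : α`. -/
def atomicAx : {Γ : Ctx} → {M : Tm} → {A : Ty} → Deriv Γ M A → Prop
  | _, _, _, .ax _ A => ∃ b, A = .var b
  | _, _, _, .cut _ D₁ D₂ _ => D₁.atomicAx ∧ D₂.atomicAx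
  | _, _, _, .arrR _ D => D.atomicAx
  | _, _, _, .arrL _ _ D₁ D₂ _ _ => D₁.atomicAx ∧ D₂.atomicAx
  | _, _, _, .allR _ _ D _ _ => D.atomicAx
  | _, _, _, .allL _ _ D => D.atomicAx
  | _, _, _, .andR0 D₁ D₂ _ _ _ _ => D₁.atomicAx ∧ D₂.atomicAx
  | _, _, _, .andL₁ _ _ D _ _ _ _ => D.atomicAx
  | _, _, _, .andL₂ _ _ D _ _ _ _ => D.atomicAx
  | _, _, _, .andR1 _ _ _ D₁ D₂ D₃ _ _ _ _ _ _ _ =>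
      D₁.atomicAx ∧ D₂.atomicAx ∧ D₃.atomicAx

/-- Well-formedness: in every instance of the rule `&R1` occurring in the derivation,
the derivation of the premise `⊢ V : A` is η-expanded (cut-free with atomic axioms);
this is part of the definition of the system `LAM`. -/
def wf : {Γ : Ctx} → {M : Tm} → {A : Ty} → Deriv Γ M A → Prop
  | _, _, _, .ax _ _ => True
  | _, _, _, .cut _ D₁ D₂ _ => D₁.wf ∧ D₂.wf
  | _, _, _, .arrR _ D => D.wf
  | _, _, _, .arrL _ _ D₁ D₂ _ _ => D₁.wf ∧ D₂.wf
  | _, _, _, .allR _ _ D _ _ => D.wf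
  | _, _, _, .allL _ _ D => D.wf
  | _, _, _, .andR0 D₁ D₂ _ _ _ _ => D₁.wf ∧ D₂.wf
  | _, _, _, .andL₁ _ _ D _ _ _ _ => D.wf
  | _, _, _, .andL₂ _ _ D _ _ _ _ => D.wf
  | _, _, _, .andR1 _ _ _ D₁ D₂ D₃ _ _ _ _ _ _ _ =>
      D₁.wf ∧ D₂.wf ∧ D₃.wf ∧ D₃.cutFree ∧ D₃.atomicAx

/-- The derivation is η-expanded: it is ∀-lazy, cut-free, and all its axioms are atomic. -/
def etaExpanded {Γ : Ctx} {M : Tm} {A : Ty} (D : Deriv Γ M A) : Prop :=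
  LazyJudg Γ A ∧ D.cutFree ∧ D.atomicAx

/-- The last rule of the derivation is `&R1`. -/
def lastAndR1 : {Γ : Ctx} → {M : Tm} → {A : Ty} → Deriv Γ M A → Prop
  | _, _, _, .andR1 _ _ _ _ _ _ _ _ _ _ _ _ _ => True
  | _, _, _, _ => False

/-- The last rule of the derivation is `&L₁` or `&L₂`. -/
def lastAndL : {Γ : Ctx} → {M : Tm} → {A : Ty} → Deriv Γ M A → Prop
  | _, _, _, .andL₁ _ _ _ _ _ _ _ => True
  | _, _, _, .andL₂ _ _ _ _ _ _ _ => True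
  | _, _, _, _ => False

/-- The last rule of the derivation is `&R0`. -/
def lastAndR0 : {Γ : Ctx} → {M : Tm} → {A : Ty} → Deriv Γ M A → Prop
  | _, _, _, .andR0 _ _ _ _ _ _ => True
  | _, _, _, _ => False

/-- The derivation contains no instance of the rules `&R1`, `&Lᵢ` and `∀L`. -/
def noAndR1AndLAllL : {Γ : Ctx} → {M : Tm} → {A : Ty} → Deriv Γ M A → Prop
  | _, _, _, .ax _ _ => True
  | _, _, _, .cut _ D₁ D₂ _ => D₁.noAndR1AndLAllL ∧ D₂.noAndR1AndLAllL
  | _, _, _, .arrR _ D => D.noAndR1AndLAllL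
  | _, _, _, .arrL _ _ D₁ D₂ _ _ => D₁.noAndR1AndLAllL ∧ D₂.noAndR1AndLAllL
  | _, _, _, .allR _ _ D _ _ => D.noAndR1AndLAllL
  | _, _, _, .allL _ _ _ => False
  | _, _, _, .andR0 D₁ D₂ _ _ _ _ => D₁.noAndR1AndLAllL ∧ D₂.noAndR1AndLAllL
  | _, _, _, .andL₁ _ _ _ _ _ _ _ => False
  | _, _, _, .andL₂ _ _ _ _ _ _ _ => False
  | _, _, _, .andR1 _ _ _ _ _ _ _ _ _ _ _ _ _ => False

end Deriv

/-- `Γ ⊢ M : A` is derivable in `LAM`. -/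
def Judg (Γ : Ctx) (M : Tm) (A : Ty) : Prop := ∃ D : Deriv Γ M A, D.wf

/-- A derivation of `LAM` packaged with its conclusion. -/
structure DS : Type where
  ctx : Ctx
  tm : Tm
  ty : Ty
  deriv : Deriv ctx tm ty

namespace Deriv

/-- Some instance of `cut` in the derivation has premises satisfying `P`. -/
def exCut (P : DS → DS → Prop) :
    {Γ : Ctx} → {M : Tm} → {A : Ty} → Deriv Γ M A → Prop
  | _, _, _, .ax _ _ => False
  | _, _, _, .cut _ D₁ D₂ _ =>
      P ⟨_, _, _, D₁⟩ ⟨_, _, _, D₂⟩ ∨ D₁.exCut P ∨ D₂.exCut P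
  | _, _, _, .arrR _ D => D.exCut P
  | _, _, _, .arrL _ _ D₁ D₂ _ _ => D₁.exCut P ∨ D₂.exCut P
  | _, _, _, .allR _ _ D _ _ => D.exCut P
  | _, _, _, .allL _ _ D => D.exCut P
  | _, _, _, .andR0 D₁ D₂ _ _ _ _ => D₁.exCut P ∨ D₂.exCut P
  | _, _, _, .andL₁ _ _ D _ _ _ _ => D.exCut P
  | _, _, _, .andL₂ _ _ D _ _ _ _ => D.exCut P
  | _, _, _, .andR1 _ _ _ D₁ D₂ D₃ _ _ _ _ _ _ _ =>
      D₁.exCut P ∨ D₂.exCut P ∨ D₃.exCut P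

/-- Every instance of `cut` in the derivation has premises satisfying `P`. -/
def allCut (P : DS → DS → Prop) :
    {Γ : Ctx} → {M : Tm} → {A : Ty} → Deriv Γ M A → Prop
  | _, _, _, .ax _ _ => True
  | _, _, _, .cut _ D₁ D₂ _ =>
      P ⟨_, _, _, D₁⟩ ⟨_, _, _, D₂⟩ ∧ D₁.allCut P ∧ D₂.allCut P
  | _, _, _, .arrR _ D => D.allCut P
  | _, _, _, .arrL _ _ D₁ D₂ _ _ => D₁.allCut P ∧ D₂.allCut P
  | _, _, _, .allR _ _ D _ _ => D.allCut P
  | _, _, _, .allL _ _ D => D.allCut P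
  | _, _, _, .andR0 D₁ D₂ _ _ _ _ => D₁.allCut P ∧ D₂.allCut P
  | _, _, _, .andL₁ _ _ D _ _ _ _ => D.allCut P
  | _, _, _, .andL₂ _ _ D _ _ _ _ => D.allCut P
  | _, _, _, .andR1 _ _ _ D₁ D₂ D₃ _ _ _ _ _ _ _ =>
      D₁.allCut P ∧ D₂.allCut P ∧ D₃.allCut P

end Deriv

/-! ## Classification of cuts -/

/-- A critical cut: the right premise is the conclusion of `&R1`. -/
def isCriticalCut (_l r : DS) : Prop := r.deriv.lastAndR1

/-- A copy-first cut: the left premise is the conclusion of `&R1`,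
the right one of `&Lᵢ`. -/
def isCopyFirstCut (l r : DS) : Prop := l.deriv.lastAndR1 ∧ r.deriv.lastAndL

/-- A safe cut: a critical cut whose left premise has empty context. -/
def isSafeCut (l r : DS) : Prop := isCriticalCut l r ∧ l.ctx = 0

/-- A deadlock: a critical cut whose left premise has nonempty context. -/
def isDeadlockCut (l r : DS) : Prop := isCriticalCut l r ∧ l.ctx ≠ 0

/-- A ready cut: a safe cut whose left premise has a cut-free derivation. -/
def isReadyCut (l r : DS) : Prop := isSafeCut l r ∧ l.deriv.cutFree

/-! ## ∀-lazy cut elimination -/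

/-- Transport a derivation along an equality of contexts. -/
def Deriv.castC {Γ Γ' : Ctx} {M : Tm} {A : Ty} (h : Γ = Γ') (D : Deriv Γ M A) :
    Deriv Γ' M A := h ▸ D

/-- The ∀-lazy cut-elimination rule for ready cuts `(X, &R1)`. -/
inductive ReadyRoot : DS → DS → Prop
  | ready {V M₁ M₂ U : Tm} {A A₁ A₂ : Ty} (x x₁ x₂ : ℕ)
      (Dv : Deriv 0 V A) (hcf : Dv.cutFree)
      (D₁ : Deriv ((x₁, A) ::ₘ 0) M₁ A₁) (D₂ : Deriv ((x₂, A) ::ₘ 0) M₂ A₂)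
      (D₃ : Deriv 0 U A) (hU : IsValue U)
      (cA : A.fv = ∅) (c₁ : A₁.fv = ∅) (c₂ : A₂.fv = ∅)
      (lA : A.noNegForall) (l₁ : A₁.noNegForall) (l₂ : A₂.noNegForall)
      (h : Disjoint (ctxFv (0 : Ctx)) (ctxFv (0 : Ctx)))
      (h₁ h₂ : Disjoint (ctxFv (0 : Ctx)) (ctxFv (0 : Ctx)))
      (e : (0 : Ctx) + 0 = 0) :
      ReadyRoot
        ⟨_, _, _, .cut x Dv (.andR1 x x₁ x₂ D₁ D₂ D₃ hU cA c₁ c₂ lA l₁ l₂) h⟩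
        ⟨_, _, _, .andR0 (Deriv.castC e (.cut x₁ Dv D₁ h₁))
            (Deriv.castC e (.cut x₂ Dv D₂ h₂)) c₁ c₂ l₁ l₂⟩

/-- The ∀-lazy cut-elimination rules, applied at the root of the derivation:
symmetric cuts (axiom cuts, `(⊸R,⊸L)`, `(∀R,∀L)`, `(&R0,&Lᵢ)`), ready critical
cuts `(X,&R1)`, and the standard commuting cuts. There is no rule for copy-first
cuts and for critical cuts that are not ready. -/
inductive RootStep : DS → DS → Prop
  /- ready cuts -/
  | ofReady {s t : DS} : ReadyRoot s t → RootStep s t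
  /- symmetric cuts: axiom left -/
  | axL {Δ : Ctx} {M : Tm} {C : Ty} (x : ℕ) (A : Ty) (D₂ : Deriv ((x, A) ::ₘ Δ) M C)
      (h : Disjoint (ctxFv ((x, A) ::ₘ (0 : Ctx))) (ctxFv Δ)) :
      RootStep ⟨_, _, _, .cut x (.ax x A) D₂ h⟩ ⟨_, _, _, D₂⟩
  /- symmetric cuts: axiom right -/
  | axR {Γ : Ctx} {N : Tm} {A : Ty} (x : ℕ) (D₁ : Deriv Γ N A)
      (h : Disjoint (ctxFv Γ) (ctxFv (0 : Ctx))) :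
      RootStep ⟨_, _, _, .cut x D₁ (.ax x A) h⟩ ⟨_, _, _, D₁⟩
  /- symmetric cuts: `(⊸R, ⊸L)` -/
  | beta {Γ Γ₁ Δ₁ : Ctx} {M₀ N M : Tm} {A B C : Ty} (x x' y : ℕ)
      (D₀ : Deriv ((x, A) ::ₘ Γ) M₀ B)
      (D₁ : Deriv Γ₁ N A) (D₂ : Deriv ((x', B) ::ₘ Δ₁) M C)
      (h₁ : Disjoint (ctxFv Γ₁) (ctxFv Δ₁)) (hc : B.fv = ∅ → A.fv = ∅)
      (h₂ : Disjoint (ctxFv Γ) (ctxFv (Γ₁ + Δ₁)))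
      (h₃ : Disjoint (ctxFv Γ₁) (ctxFv Γ))
      (h₄ : Disjoint (ctxFv (Γ₁ + Γ)) (ctxFv Δ₁)) :
      RootStep ⟨_, _, _, .cut y (.arrR x D₀) (.arrL x' y D₁ D₂ h₁ hc) h₂⟩
               ⟨_, _, _, .cut x' (.cut x D₁ D₀ h₃) D₂ h₄⟩
  /- symmetric cuts: `(∀R, ∀L)`; `D₀'` is obtained from `D₀` by substituting `B`
  for the fresh type variable `g` -/
  | forallP {Γ Δ : Ctx} {M₀ M : Tm} {A B C : Ty} (a g x : ℕ)
      (D₀ : Deriv Γ M₀ (A.tsubst a (.var g))) (hg : g ∉ ctxFv Γ)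
      (hclo : (Ty.all a A).fv = ∅ → ctxFv Γ = ∅)
      (D₀' : Deriv Γ M₀ (A.tsubst a B))
      (D₁ : Deriv ((x, A.tsubst a B) ::ₘ Δ) M C)
      (h : Disjoint (ctxFv Γ) (ctxFv Δ)) :
      RootStep ⟨_, _, _, .cut x (.allR a g D₀ hg hclo) (.allL x a D₁) h⟩
               ⟨_, _, _, .cut x D₀' D₁ h⟩
  /- symmetric cuts: `(&R0, &L₁)` -/
  | andP₁ {Γ : Ctx} {N₁ N₂ M : Tm} {A₁ A₂ C : Ty} (x y : ℕ)
      (Da : Deriv 0 N₁ A₁) (Db : Deriv 0 N₂ A₂)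
      (c₁ : A₁.fv = ∅) (c₂ : A₂.fv = ∅) (l₁ : A₁.noNegForall) (l₂ : A₂.noNegForall)
      (D₁ : Deriv ((x, A₁) ::ₘ Γ) M C)
      (h : Disjoint (ctxFv (0 : Ctx)) (ctxFv Γ)) :
      RootStep ⟨_, _, _, .cut y (.andR0 Da Db c₁ c₂ l₁ l₂) (.andL₁ x y D₁ c₁ c₂ l₁ l₂) h⟩
               ⟨_, _, _, .cut x Da D₁ h⟩
  /- symmetric cuts: `(&R0, &L₂)` -/
  | andP₂ {Γ : Ctx} {N₁ N₂ M : Tm} {A₁ A₂ C : Ty} (x y : ℕ)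
      (Da : Deriv 0 N₁ A₁) (Db : Deriv 0 N₂ A₂)
      (c₁ : A₁.fv = ∅) (c₂ : A₂.fv = ∅) (l₁ : A₁.noNegForall) (l₂ : A₂.noNegForall)
      (D₁ : Deriv ((x, A₂) ::ₘ Γ) M C)
      (h : Disjoint (ctxFv (0 : Ctx)) (ctxFv Γ)) :
      RootStep ⟨_, _, _, .cut y (.andR0 Da Db c₁ c₂ l₁ l₂) (.andL₂ x y D₁ c₁ c₂ l₁ l₂) h⟩
               ⟨_, _, _, .cut x Db D₁ h⟩
  /- commuting cut: the right premise ends with `⊸R` -/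
  | rcArrR {Γ Δ : Ctx} {N M : Tm} {A B' B : Ty} (x y : ℕ)
      (D₁ : Deriv Γ N A) (D₂ : Deriv ((y, B') ::ₘ (x, A) ::ₘ Δ) M B)
      (h : Disjoint (ctxFv Γ) (ctxFv Δ))
      (e₁ : (y, B') ::ₘ (x, A) ::ₘ Δ = (x, A) ::ₘ ((y, B') ::ₘ Δ))
      (h' : Disjoint (ctxFv Γ) (ctxFv ((y, B') ::ₘ Δ)))
      (e₂ : Γ + ((y, B') ::ₘ Δ) = (y, B') ::ₘ (Γ + Δ)) :
      RootStep ⟨_, _, _, .cut x D₁ (.arrR y D₂) h⟩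
               ⟨_, _, _, .arrR y (Deriv.castC e₂ (.cut x D₁ (Deriv.castC e₁ D₂) h'))⟩
  /- commuting cut: the right premise ends with `∀R` -/
  | rcAllR {Γ Δ : Ctx} {N M : Tm} {A A' : Ty} (x a g : ℕ)
      (D₁ : Deriv Γ N A) (D₂ : Deriv ((x, A) ::ₘ Δ) M (A'.tsubst a (.var g)))
      (hg : g ∉ ctxFv ((x, A) ::ₘ Δ))
      (hclo : (Ty.all a A').fv = ∅ → ctxFv ((x, A) ::ₘ Δ) = ∅)
      (h : Disjoint (ctxFv Γ) (ctxFv Δ))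
      (hg' : g ∉ ctxFv (Γ + Δ))
      (hclo' : (Ty.all a A').fv = ∅ → ctxFv (Γ + Δ) = ∅) :
      RootStep ⟨_, _, _, .cut x D₁ (.allR a g D₂ hg hclo) h⟩
               ⟨_, _, _, .allR a g (.cut x D₁ D₂ h) hg' hclo'⟩
  /- commuting cut: the right premise ends with `∀L` (on a non-principal assumption) -/
  | rcAllL {Γ Δ' : Ctx} {N M : Tm} {A A' B C : Ty} (x z a : ℕ)
      (D₁ : Deriv Γ N A)
      (D₂ : Deriv ((z, A'.tsubst a B) ::ₘ (x, A) ::ₘ Δ') M C)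
      (e₀ : (z, Ty.all a A') ::ₘ (x, A) ::ₘ Δ' = (x, A) ::ₘ ((z, Ty.all a A') ::ₘ Δ'))
      (h : Disjoint (ctxFv Γ) (ctxFv ((z, Ty.all a A') ::ₘ Δ')))
      (e₁ : (z, A'.tsubst a B) ::ₘ (x, A) ::ₘ Δ' = (x, A) ::ₘ ((z, A'.tsubst a B) ::ₘ Δ'))
      (h' : Disjoint (ctxFv Γ) (ctxFv ((z, A'.tsubst a B) ::ₘ Δ')))
      (e₂ : Γ + ((z, A'.tsubst a B) ::ₘ Δ') = (z, A'.tsubst a B) ::ₘ (Γ + Δ'))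
      (e₃ : (z, Ty.all a A') ::ₘ (Γ + Δ') = Γ + ((z, Ty.all a A') ::ₘ Δ')) :
      RootStep ⟨_, _, _, .cut x D₁ (Deriv.castC e₀ (.allL z a D₂)) h⟩
               ⟨_, _, _, Deriv.castC e₃
                  (.allL z a (Deriv.castC e₂ (.cut x D₁ (Deriv.castC e₁ D₂) h')))⟩
  /- commuting cut: the right premise ends with `&L₁` (on a non-principal assumption) -/
  | rcAndL₁ {Γ Δ' : Ctx} {N M : Tm} {A A₁ A₂ C : Ty} (x x' z : ℕ)
      (D₁ : Deriv Γ N A)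
      (D₂ : Deriv ((x', A₁) ::ₘ (x, A) ::ₘ Δ') M C)
      (c₁ : A₁.fv = ∅) (c₂ : A₂.fv = ∅) (l₁ : A₁.noNegForall) (l₂ : A₂.noNegForall)
      (e₀ : (z, Ty.wth A₁ A₂) ::ₘ (x, A) ::ₘ Δ' = (x, A) ::ₘ ((z, Ty.wth A₁ A₂) ::ₘ Δ'))
      (h : Disjoint (ctxFv Γ) (ctxFv ((z, Ty.wth A₁ A₂) ::ₘ Δ')))
      (e₁ : (x', A₁) ::ₘ (x, A) ::ₘ Δ' = (x, A) ::ₘ ((x', A₁) ::ₘ Δ'))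
      (h' : Disjoint (ctxFv Γ) (ctxFv ((x', A₁) ::ₘ Δ')))
      (e₂ : Γ + ((x', A₁) ::ₘ Δ') = (x', A₁) ::ₘ (Γ + Δ'))
      (e₃ : (z, Ty.wth A₁ A₂) ::ₘ (Γ + Δ') = Γ + ((z, Ty.wth A₁ A₂) ::ₘ Δ')) :
      RootStep ⟨_, _, _, .cut x D₁ (Deriv.castC e₀ (.andL₁ x' z D₂ c₁ c₂ l₁ l₂)) h⟩
               ⟨_, _, _, Deriv.castC e₃
                  (.andL₁ x' z (Deriv.castC e₂ (.cut x D₁ (Deriv.castC e₁ D₂) h'))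
                    c₁ c₂ l₁ l₂)⟩
  /- commuting cut: the right premise ends with `&L₂` (on a non-principal assumption) -/
  | rcAndL₂ {Γ Δ' : Ctx} {N M : Tm} {A A₁ A₂ C : Ty} (x x' z : ℕ)
      (D₁ : Deriv Γ N A)
      (D₂ : Deriv ((x', A₂) ::ₘ (x, A) ::ₘ Δ') M C)
      (c₁ : A₁.fv = ∅) (c₂ : A₂.fv = ∅) (l₁ : A₁.noNegForall) (l₂ : A₂.noNegForall)
      (e₀ : (z, Ty.wth A₁ A₂) ::ₘ (x, A) ::ₘ Δ' = (x, A) ::ₘ ((z, Ty.wth A₁ A₂) ::ₘ Δ'))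
      (h : Disjoint (ctxFv Γ) (ctxFv ((z, Ty.wth A₁ A₂) ::ₘ Δ')))
      (e₁ : (x', A₂) ::ₘ (x, A) ::ₘ Δ' = (x, A) ::ₘ ((x', A₂) ::ₘ Δ'))
      (h' : Disjoint (ctxFv Γ) (ctxFv ((x', A₂) ::ₘ Δ')))
      (e₂ : Γ + ((x', A₂) ::ₘ Δ') = (x', A₂) ::ₘ (Γ + Δ'))
      (e₃ : (z, Ty.wth A₁ A₂) ::ₘ (Γ + Δ') = Γ + ((z, Ty.wth A₁ A₂) ::ₘ Δ')) :
      RootStep ⟨_, _, _, .cut x D₁ (Deriv.castC e₀ (.andL₂ x' z D₂ c₁ c₂ l₁ l₂)) h⟩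
               ⟨_, _, _, Deriv.castC e₃
                  (.andL₂ x' z (Deriv.castC e₂ (.cut x D₁ (Deriv.castC e₁ D₂) h'))
                    c₁ c₂ l₁ l₂)⟩
  /- commuting cut: the right premise ends with `⊸L`, cut formula in its left premise -/
  | rcArrLL {Γ Γa' Δb : Ctx} {N N' M : Tm} {A A' B' C : Ty} (x x' y : ℕ)
      (D₁ : Deriv Γ N A)
      (Da : Deriv ((x, A) ::ₘ Γa') N' A') (Db : Deriv ((x', B') ::ₘ Δb) M C)
      (hd : Disjoint (ctxFv ((x, A) ::ₘ Γa')) (ctxFv Δb))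
      (hc : B'.fv = ∅ → A'.fv = ∅)
      (e₀ : (y, Ty.arrow A' B') ::ₘ (((x, A) ::ₘ Γa') + Δb) =
              (x, A) ::ₘ ((y, Ty.arrow A' B') ::ₘ (Γa' + Δb)))
      (h : Disjoint (ctxFv Γ) (ctxFv ((y, Ty.arrow A' B') ::ₘ (Γa' + Δb))))
      (h₁ : Disjoint (ctxFv Γ) (ctxFv Γa'))
      (hd' : Disjoint (ctxFv (Γ + Γa')) (ctxFv Δb)) :
      RootStep ⟨_, _, _, .cut x D₁ (Deriv.castC e₀ (.arrL x' y Da Db hd hc)) h⟩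
               ⟨_, _, _, .arrL x' y (.cut x D₁ Da h₁) Db hd' hc⟩
  /- commuting cut: the right premise ends with `⊸L`, cut formula in its right premise -/
  | rcArrLR {Γ Γa Δb' : Ctx} {N N' M : Tm} {A A' B' C : Ty} (x x' y : ℕ)
      (D₁ : Deriv Γ N A)
      (Da : Deriv Γa N' A') (Db : Deriv ((x', B') ::ₘ (x, A) ::ₘ Δb') M C)
      (hd : Disjoint (ctxFv Γa) (ctxFv ((x, A) ::ₘ Δb')))
      (hc : B'.fv = ∅ → A'.fv = ∅)
      (e₀ : (y, Ty.arrow A' B') ::ₘ (Γa + ((x, A) ::ₘ Δb')) =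
              (x, A) ::ₘ ((y, Ty.arrow A' B') ::ₘ (Γa + Δb')))
      (h : Disjoint (ctxFv Γ) (ctxFv ((y, Ty.arrow A' B') ::ₘ (Γa + Δb'))))
      (e₁ : (x', B') ::ₘ (x, A) ::ₘ Δb' = (x, A) ::ₘ ((x', B') ::ₘ Δb'))
      (h₁ : Disjoint (ctxFv Γ) (ctxFv ((x', B') ::ₘ Δb')))
      (e₂ : Γ + ((x', B') ::ₘ Δb') = (x', B') ::ₘ (Γ + Δb'))
      (hd' : Disjoint (ctxFv Γa) (ctxFv (Γ + Δb'))) :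
      RootStep ⟨_, _, _, .cut x D₁ (Deriv.castC e₀ (.arrL x' y Da Db hd hc)) h⟩
               ⟨_, _, _, .arrL x' y Da (Deriv.castC e₂ (.cut x D₁ (Deriv.castC e₁ Db) h₁)) hd' hc⟩
  /- commuting cut: the right premise ends with `cut`, cut formula in its left premise -/
  | rcCutL {Γ Γa' Δb : Ctx} {N N' M : Tm} {A A'' C : Ty} (x z : ℕ)
      (D₁ : Deriv Γ N A)
      (Da : Deriv ((x, A) ::ₘ Γa') N' A'') (Db : Deriv ((z, A'') ::ₘ Δb) M C)
      (h₂ : Disjoint (ctxFv ((x, A) ::ₘ Γa')) (ctxFv Δb))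
      (e₀ : ((x, A) ::ₘ Γa') + Δb = (x, A) ::ₘ (Γa' + Δb))
      (h : Disjoint (ctxFv Γ) (ctxFv (Γa' + Δb)))
      (h₁ : Disjoint (ctxFv Γ) (ctxFv Γa'))
      (hd' : Disjoint (ctxFv (Γ + Γa')) (ctxFv Δb)) :
      RootStep ⟨_, _, _, .cut x D₁ (Deriv.castC e₀ (.cut z Da Db h₂)) h⟩
               ⟨_, _, _, .cut z (.cut x D₁ Da h₁) Db hd'⟩
  /- commuting cut: the right premise ends with `cut`, cut formula in its right premise -/
  | rcCutR {Γ Γa Δb' : Ctx} {N N' M : Tm} {A A'' C : Ty} (x z : ℕ)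
      (D₁ : Deriv Γ N A)
      (Da : Deriv Γa N' A'') (Db : Deriv ((z, A'') ::ₘ (x, A) ::ₘ Δb') M C)
      (h₂ : Disjoint (ctxFv Γa) (ctxFv ((x, A) ::ₘ Δb')))
      (e₀ : Γa + ((x, A) ::ₘ Δb') = (x, A) ::ₘ (Γa + Δb'))
      (h : Disjoint (ctxFv Γ) (ctxFv (Γa + Δb')))
      (e₁ : (z, A'') ::ₘ (x, A) ::ₘ Δb' = (x, A) ::ₘ ((z, A'') ::ₘ Δb'))
      (h₁ : Disjoint (ctxFv Γ) (ctxFv ((z, A'') ::ₘ Δb')))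
      (e₂ : Γ + ((z, A'') ::ₘ Δb') = (z, A'') ::ₘ (Γ + Δb'))
      (hd' : Disjoint (ctxFv Γa) (ctxFv (Γ + Δb'))) :
      RootStep ⟨_, _, _, .cut x D₁ (Deriv.castC e₀ (.cut z Da Db h₂)) h⟩
               ⟨_, _, _, .cut z Da (Deriv.castC e₂ (.cut x D₁ (Deriv.castC e₁ Db) h₁)) hd'⟩
  /- commuting cut: the left premise ends with `cut` -/
  | lcCut {Γa Δb Δ : Ctx} {P N M : Tm} {E A C : Ty} (x z : ℕ)
      (Da : Deriv Γa P E) (Db : Deriv ((z, E) ::ₘ Δb) N A)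
      (D₂ : Deriv ((x, A) ::ₘ Δ) M C)
      (h₁ : Disjoint (ctxFv Γa) (ctxFv Δb))
      (h : Disjoint (ctxFv (Γa + Δb)) (ctxFv Δ))
      (h₂ : Disjoint (ctxFv ((z, E) ::ₘ Δb)) (ctxFv Δ))
      (e : ((z, E) ::ₘ Δb) + Δ = (z, E) ::ₘ (Δb + Δ))
      (hd' : Disjoint (ctxFv Γa) (ctxFv (Δb + Δ))) :
      RootStep ⟨_, _, _, .cut x (.cut z Da Db h₁) D₂ h⟩
               ⟨_, _, _, .cut z Da (Deriv.castC e (.cut x Db D₂ h₂)) hd'⟩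
  /- commuting cut: the left premise ends with `⊸L` -/
  | lcArrL {Γa Δb Δ : Ctx} {N' Nb M : Tm} {A' B' A C : Ty} (x x' y : ℕ)
      (Da : Deriv Γa N' A') (Db : Deriv ((x', B') ::ₘ Δb) Nb A)
      (h₁ : Disjoint (ctxFv Γa) (ctxFv Δb)) (hc : B'.fv = ∅ → A'.fv = ∅)
      (D₂ : Deriv ((x, A) ::ₘ Δ) M C)
      (h : Disjoint (ctxFv ((y, Ty.arrow A' B') ::ₘ (Γa + Δb))) (ctxFv Δ))
      (h₂ : Disjoint (ctxFv ((x', B') ::ₘ Δb)) (ctxFv Δ))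
      (e : ((x', B') ::ₘ Δb) + Δ = (x', B') ::ₘ (Δb + Δ))
      (hd' : Disjoint (ctxFv Γa) (ctxFv (Δb + Δ))) :
      RootStep ⟨_, _, _, .cut x (.arrL x' y Da Db h₁ hc) D₂ h⟩
               ⟨_, _, _, .arrL x' y Da (Deriv.castC e (.cut x Db D₂ h₂)) hd' hc⟩
  /- commuting cut: the left premise ends with `∀L` -/
  | lcAllL {Γ' Δ : Ctx} {N M : Tm} {A' B A C : Ty} (x z a : ℕ)
      (Dl : Deriv ((z, A'.tsubst a B) ::ₘ Γ') N A)
      (D₂ : Deriv ((x, A) ::ₘ Δ) M C)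
      (h : Disjoint (ctxFv ((z, Ty.all a A') ::ₘ Γ')) (ctxFv Δ))
      (h₂ : Disjoint (ctxFv ((z, A'.tsubst a B) ::ₘ Γ')) (ctxFv Δ))
      (e : ((z, A'.tsubst a B) ::ₘ Γ') + Δ = (z, A'.tsubst a B) ::ₘ (Γ' + Δ)) :
      RootStep ⟨_, _, _, .cut x (.allL z a Dl) D₂ h⟩
               ⟨_, _, _, .allL z a (Deriv.castC e (.cut x Dl D₂ h₂))⟩
  /- commuting cut: the left premise ends with `&L₁` -/
  | lcAndL₁ {Γ' Δ : Ctx} {N M : Tm} {A₁ A₂ A C : Ty} (x x' z : ℕ)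
      (Dl : Deriv ((x', A₁) ::ₘ Γ') N A)
      (c₁ : A₁.fv = ∅) (c₂ : A₂.fv = ∅) (l₁ : A₁.noNegForall) (l₂ : A₂.noNegForall)
      (D₂ : Deriv ((x, A) ::ₘ Δ) M C)
      (h : Disjoint (ctxFv ((z, Ty.wth A₁ A₂) ::ₘ Γ')) (ctxFv Δ))
      (h₂ : Disjoint (ctxFv ((x', A₁) ::ₘ Γ')) (ctxFv Δ))
      (e : ((x', A₁) ::ₘ Γ') + Δ = (x', A₁) ::ₘ (Γ' + Δ)) :
      RootStep ⟨_, _, _, .cut x (.andL₁ x' z Dl c₁ c₂ l₁ l₂) D₂ h⟩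
               ⟨_, _, _, .andL₁ x' z (Deriv.castC e (.cut x Dl D₂ h₂)) c₁ c₂ l₁ l₂⟩
  /- commuting cut: the left premise ends with `&L₂` -/
  | lcAndL₂ {Γ' Δ : Ctx} {N M : Tm} {A₁ A₂ A C : Ty} (x x' z : ℕ)
      (Dl : Deriv ((x', A₂) ::ₘ Γ') N A)
      (c₁ : A₁.fv = ∅) (c₂ : A₂.fv = ∅) (l₁ : A₁.noNegForall) (l₂ : A₂.noNegForall)
      (D₂ : Deriv ((x, A) ::ₘ Δ) M C)
      (h : Disjoint (ctxFv ((z, Ty.wth A₁ A₂) ::ₘ Γ')) (ctxFv Δ))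
      (h₂ : Disjoint (ctxFv ((x', A₂) ::ₘ Γ')) (ctxFv Δ))
      (e : ((x', A₂) ::ₘ Γ') + Δ = (x', A₂) ::ₘ (Γ' + Δ)) :
      RootStep ⟨_, _, _, .cut x (.andL₂ x' z Dl c₁ c₂ l₁ l₂) D₂ h⟩
               ⟨_, _, _, .andL₂ x' z (Deriv.castC e (.cut x Dl D₂ h₂)) c₁ c₂ l₁ l₂⟩

/-- Closure of a relation on packaged derivations under all the rules of `LAM`
(a step may be applied anywhere inside a derivation). -/
inductive Clos (R : DS → DS → Prop) : DS → DS → Prop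
  | base {s t : DS} : R s t → Clos R s t
  | cutL {Γ Δ : Ctx} {N N' M : Tm} {A C : Ty} (x : ℕ)
      (D₁ : Deriv Γ N A) (D₁' : Deriv Γ N' A) (D₂ : Deriv ((x, A) ::ₘ Δ) M C)
      (h : Disjoint (ctxFv Γ) (ctxFv Δ)) :
      Clos R ⟨_, _, _, D₁⟩ ⟨_, _, _, D₁'⟩ →
      Clos R ⟨_, _, _, .cut x D₁ D₂ h⟩ ⟨_, _, _, .cut x D₁' D₂ h⟩
  | cutR {Γ Δ : Ctx} {N M M' : Tm} {A C : Ty} (x : ℕ)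
      (D₁ : Deriv Γ N A) (D₂ : Deriv ((x, A) ::ₘ Δ) M C) (D₂' : Deriv ((x, A) ::ₘ Δ) M' C)
      (h : Disjoint (ctxFv Γ) (ctxFv Δ)) :
      Clos R ⟨_, _, _, D₂⟩ ⟨_, _, _, D₂'⟩ →
      Clos R ⟨_, _, _, .cut x D₁ D₂ h⟩ ⟨_, _, _, .cut x D₁ D₂' h⟩
  | arrR {Γ : Ctx} {M M' : Tm} {A B : Ty} (x : ℕ)
      (D : Deriv ((x, A) ::ₘ Γ) M B) (D' : Deriv ((x, A) ::ₘ Γ) M' B) :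
      Clos R ⟨_, _, _, D⟩ ⟨_, _, _, D'⟩ →
      Clos R ⟨_, _, _, .arrR x D⟩ ⟨_, _, _, .arrR x D'⟩
  | arrLL {Γ Δ : Ctx} {N N' M : Tm} {A B C : Ty} (x y : ℕ)
      (D₁ : Deriv Γ N A) (D₁' : Deriv Γ N' A) (D₂ : Deriv ((x, B) ::ₘ Δ) M C)
      (h : Disjoint (ctxFv Γ) (ctxFv Δ)) (hc : B.fv = ∅ → A.fv = ∅) :
      Clos R ⟨_, _, _, D₁⟩ ⟨_, _, _, D₁'⟩ →
      Clos R ⟨_, _, _, .arrL x y D₁ D₂ h hc⟩ ⟨_, _, _, .arrL x y D₁' D₂ h hc⟩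
  | arrLR {Γ Δ : Ctx} {N M M' : Tm} {A B C : Ty} (x y : ℕ)
      (D₁ : Deriv Γ N A) (D₂ : Deriv ((x, B) ::ₘ Δ) M C) (D₂' : Deriv ((x, B) ::ₘ Δ) M' C)
      (h : Disjoint (ctxFv Γ) (ctxFv Δ)) (hc : B.fv = ∅ → A.fv = ∅) :
      Clos R ⟨_, _, _, D₂⟩ ⟨_, _, _, D₂'⟩ →
      Clos R ⟨_, _, _, .arrL x y D₁ D₂ h hc⟩ ⟨_, _, _, .arrL x y D₁ D₂' h hc⟩
  | allR {Γ : Ctx} {M M' : Tm} {A : Ty} (a g : ℕ)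
      (D : Deriv Γ M (A.tsubst a (.var g))) (D' : Deriv Γ M' (A.tsubst a (.var g)))
      (hg : g ∉ ctxFv Γ) (hclo : (Ty.all a A).fv = ∅ → ctxFv Γ = ∅) :
      Clos R ⟨_, _, _, D⟩ ⟨_, _, _, D'⟩ →
      Clos R ⟨_, _, _, .allR a g D hg hclo⟩ ⟨_, _, _, .allR a g D' hg hclo⟩
  | allL {Γ : Ctx} {M M' : Tm} {A B C : Ty} (x a : ℕ)
      (D : Deriv ((x, A.tsubst a B) ::ₘ Γ) M C) (D' : Deriv ((x, A.tsubst a B) ::ₘ Γ) M' C) :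
      Clos R ⟨_, _, _, D⟩ ⟨_, _, _, D'⟩ →
      Clos R ⟨_, _, _, .allL x a D⟩ ⟨_, _, _, .allL x a D'⟩
  | andR0L {M₁ M₁' M₂ : Tm} {A₁ A₂ : Ty}
      (D₁ : Deriv 0 M₁ A₁) (D₁' : Deriv 0 M₁' A₁) (D₂ : Deriv 0 M₂ A₂)
      (c₁ : A₁.fv = ∅) (c₂ : A₂.fv = ∅) (l₁ : A₁.noNegForall) (l₂ : A₂.noNegForall) :
      Clos R ⟨_, _, _, D₁⟩ ⟨_, _, _, D₁'⟩ →
      Clos R ⟨_, _, _, .andR0 D₁ D₂ c₁ c₂ l₁ l₂⟩ ⟨_, _, _, .andR0 D₁' D₂ c₁ c₂ l₁ l₂⟩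
  | andR0R {M₁ M₂ M₂' : Tm} {A₁ A₂ : Ty}
      (D₁ : Deriv 0 M₁ A₁) (D₂ : Deriv 0 M₂ A₂) (D₂' : Deriv 0 M₂' A₂)
      (c₁ : A₁.fv = ∅) (c₂ : A₂.fv = ∅) (l₁ : A₁.noNegForall) (l₂ : A₂.noNegForall) :
      Clos R ⟨_, _, _, D₂⟩ ⟨_, _, _, D₂'⟩ →
      Clos R ⟨_, _, _, .andR0 D₁ D₂ c₁ c₂ l₁ l₂⟩ ⟨_, _, _, .andR0 D₁ D₂' c₁ c₂ l₁ l₂⟩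
  | andL₁ {Γ : Ctx} {M M' : Tm} {A₁ A₂ C : Ty} (x y : ℕ)
      (D : Deriv ((x, A₁) ::ₘ Γ) M C) (D' : Deriv ((x, A₁) ::ₘ Γ) M' C)
      (c₁ : A₁.fv = ∅) (c₂ : A₂.fv = ∅) (l₁ : A₁.noNegForall) (l₂ : A₂.noNegForall) :
      Clos R ⟨_, _, _, D⟩ ⟨_, _, _, D'⟩ →
      Clos R ⟨_, _, _, .andL₁ x y D c₁ c₂ l₁ l₂⟩ ⟨_, _, _, .andL₁ x y D' c₁ c₂ l₁ l₂⟩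
  | andL₂ {Γ : Ctx} {M M' : Tm} {A₁ A₂ C : Ty} (x y : ℕ)
      (D : Deriv ((x, A₂) ::ₘ Γ) M C) (D' : Deriv ((x, A₂) ::ₘ Γ) M' C)
      (c₁ : A₁.fv = ∅) (c₂ : A₂.fv = ∅) (l₁ : A₁.noNegForall) (l₂ : A₂.noNegForall) :
      Clos R ⟨_, _, _, D⟩ ⟨_, _, _, D'⟩ →
      Clos R ⟨_, _, _, .andL₂ x y D c₁ c₂ l₁ l₂⟩ ⟨_, _, _, .andL₂ x y D' c₁ c₂ l₁ l₂⟩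
  | andR1L {M₁ M₁' M₂ V : Tm} {A A₁ A₂ : Ty} (x x₁ x₂ : ℕ)
      (D₁ : Deriv ((x₁, A) ::ₘ 0) M₁ A₁) (D₁' : Deriv ((x₁, A) ::ₘ 0) M₁' A₁)
      (D₂ : Deriv ((x₂, A) ::ₘ 0) M₂ A₂) (D₃ : Deriv 0 V A) (hV : IsValue V)
      (cA : A.fv = ∅) (c₁ : A₁.fv = ∅) (c₂ : A₂.fv = ∅)
      (lA : A.noNegForall) (l₁ : A₁.noNegForall) (l₂ : A₂.noNegForall) :
      Clos R ⟨_, _, _, D₁⟩ ⟨_, _, _, D₁'⟩ →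
      Clos R ⟨_, _, _, .andR1 x x₁ x₂ D₁ D₂ D₃ hV cA c₁ c₂ lA l₁ l₂⟩
             ⟨_, _, _, .andR1 x x₁ x₂ D₁' D₂ D₃ hV cA c₁ c₂ lA l₁ l₂⟩
  | andR1R {M₁ M₂ M₂' V : Tm} {A A₁ A₂ : Ty} (x x₁ x₂ : ℕ)
      (D₁ : Deriv ((x₁, A) ::ₘ 0) M₁ A₁)
      (D₂ : Deriv ((x₂, A) ::ₘ 0) M₂ A₂) (D₂' : Deriv ((x₂, A) ::ₘ 0) M₂' A₂)
      (D₃ : Deriv 0 V A) (hV : IsValue V)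
      (cA : A.fv = ∅) (c₁ : A₁.fv = ∅) (c₂ : A₂.fv = ∅)
      (lA : A.noNegForall) (l₁ : A₁.noNegForall) (l₂ : A₂.noNegForall) :
      Clos R ⟨_, _, _, D₂⟩ ⟨_, _, _, D₂'⟩ →
      Clos R ⟨_, _, _, .andR1 x x₁ x₂ D₁ D₂ D₃ hV cA c₁ c₂ lA l₁ l₂⟩
             ⟨_, _, _, .andR1 x x₁ x₂ D₁ D₂' D₃ hV cA c₁ c₂ lA l₁ l₂⟩
  | andR1V {M₁ M₂ V V' : Tm} {A A₁ A₂ : Ty} (x x₁ x₂ : ℕ)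
      (D₁ : Deriv ((x₁, A) ::ₘ 0) M₁ A₁) (D₂ : Deriv ((x₂, A) ::ₘ 0) M₂ A₂)
      (D₃ : Deriv 0 V A) (D₃' : Deriv 0 V' A) (hV : IsValue V) (hV' : IsValue V')
      (cA : A.fv = ∅) (c₁ : A₁.fv = ∅) (c₂ : A₂.fv = ∅)
      (lA : A.noNegForall) (l₁ : A₁.noNegForall) (l₂ : A₂.noNegForall) :
      Clos R ⟨_, _, _, D₃⟩ ⟨_, _, _, D₃'⟩ →
      Clos R ⟨_, _, _, .andR1 x x₁ x₂ D₁ D₂ D₃ hV cA c₁ c₂ lA l₁ l₂⟩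
             ⟨_, _, _, .andR1 x x₁ x₂ D₁ D₂ D₃' hV' cA c₁ c₂ lA l₁ l₂⟩

/-- The one-step ∀-lazy cut-elimination relation `D ⤳ D'` on derivations of `LAM`. -/
abbrev CutElim : DS → DS → Prop := Clos RootStep

/-- One-step elimination of a ready cut (anywhere inside the derivation). -/
abbrev ReadyElim : DS → DS → Prop := Clos ReadyRoot

/-! One β-step turns `add^x_{n+1}[M/x]` into `add^{x+1}_n[⟨M,M⟩/(x+1)]`: the substitution for `x`
stops at the body, whose variables are all `> x`, and the β-redex then substitutes `⟨M,M⟩`.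
Induction on `n`, with `⟨M,M⟩_[n] = M_[n+1]`, gives `n` steps to `M_[n]`; taking `M = x` gives
the first claim. -/

namespace Tm

theorem subst_var_self (M : Tm) (x : ℕ) : M.subst (var x) x = M := by
  induction M with
  | var y => by_cases h : y = x <;> simp [subst, h]
  | lam y M ih => by_cases h : y = x <;> simp [subst, h, ih]
  | copy U M y z P Q ihU ihM ihP ihQ => simp [subst, ihU, ihM, ihP, ihQ]
  | _ => simp_all [subst]

theorem pair_nest (M : Tm) (n : ℕ) : (pair M M).nest n = M.nest (n + 1) := by
  induction n with
  | zero => rfl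
  | succ n ih => simp [nest, ih]

end Tm

theorem addTm_subst_of_lt {x y : ℕ} (h : x < y) (n : ℕ) (M : Tm) :
    (addTm y n).subst M x = addTm y n := by
  induction n generalizing y with
  | zero => simp [addTm, Tm.subst, h.ne']
  | succ n ih =>
    have hsucc : x < y + 1 := Nat.lt_succ_of_lt h
    simp [addTm, Tm.subst, h.ne', hsucc.ne', ih hsucc]

theorem addTm_subst_stepN (n x : ℕ) (M : Tm) :
    StepN n ((addTm x n).subst M x) (M.nest n) := by
  induction n generalizing x M with
  | zero =>
    simp only [addTm, Tm.subst]
    exact .refl M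
  | succ n ih =>
    have hredex : (addTm x (n + 1)).subst M x =
        .app (.lam (x + 1) (addTm (x + 1) n)) (.pair M M) := by
      simp [addTm, Tm.subst, addTm_subst_of_lt (Nat.lt_succ_self x)]
    rw [hredex, ← Tm.pair_nest]
    exact RelN.head (Step.beta _ _ _) (ih (x + 1) (.pair M M))

/-- For every `n`, the term `add^x_n` β-reduces in exactly `n` steps
to `x_[n]`; more generally, for every term `M`, `add^x_n[M/x] →ⁿ_β M_[n]`. -/
theorem statement1 (n x : ℕ) :
    StepN n (addTm x n) ((Tm.var x).nest n) ∧
    ∀ M : Tm, StepN n ((addTm x n).subst M x) (M.nest n) := by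
  refine ⟨?_, addTm_subst_stepN n x⟩
  simpa [Tm.subst_var_self] using addTm_subst_stepN n x (.var x)
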